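/- Let H be a subgroup of a finite group G and σ ∈ H, and let m = [C_G(σ) : C_H(σ)]. The natural map Λ_H(σ) → Λ_G(σ), [h, t] ↦ [h, t], is an injective group homomorphism. Let λ be a complex representation of C_H(σ) on a finite-dimensional space V and χ : ℝ → ℂˣ a group homomorphism with λ(σ) = χ(1)·id_V, so that λ⊙χ is a representation of Λ_H(σ). Then the induced representation Ind from Λ_H(σ) to Λ_G(σ) of λ⊙χ is isomorphic, as a representation of Λ_G(σ), to (Ind_{C_H(σ)}^{C_G(σ)} λ)⊙χ; in particular (Ind_{C_H(σ)}^{C_G(σ)} λ)(σ) = χ(1)·id, so the right-hand side is defined, and the underlying vector space of both is V^{⊕m}. -/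
import Mathlib


noncomputable section

/-- The element `g` as an element of its own centralizer. -/
def gElem {G : Type} [Group G] (g : G) : Subgroup.centralizer ({g} : Set G) :=
  ⟨g, by rw [Subgroup.mem_centralizer_iff]; rintro h rfl; rfl⟩

/-- The central element `(g, -k)` of `C_G(g) × ℝ`. -/
def zElem {G : Type} [Group G] (g : G) (k : ℤ) :
    Subgroup.centralizer ({g} : Set G) × Multiplicative ℝ :=
  (gElem g, Multiplicative.ofAdd (-(k : ℝ)))

theorem zElem_comm {G : Type} [Group G] (g : G) (k : ℤ)
    (x : Subgroup.centralizer ({g} : Set G) × Multiplicative ℝ) :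
    Commute x (zElem g k) := by
  have h1 : x.1 * gElem g = gElem g * x.1 := by
    apply Subtype.ext
    exact (Subgroup.mem_centralizer_iff.mp x.1.2 g rfl).symm
  exact Prod.ext h1 (mul_comm _ _)

/-- The subgroup of `C_G(g) × ℝ` generated by `(g, -k)`. -/
def lambdaRel {G : Type} [Group G] (g : G) (k : ℤ) :
    Subgroup (Subgroup.centralizer ({g} : Set G) × Multiplicative ℝ) :=
  Subgroup.zpowers (zElem g k)

instance lambdaRel_normal {G : Type} [Group G] (g : G) (k : ℤ) : (lambdaRel g k).Normal := by
  constructor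
  intro n hn x
  rw [lambdaRel, Subgroup.mem_zpowers_iff] at hn
  obtain ⟨m, rfl⟩ := hn
  have h := ((zElem_comm g k x).zpow_right m).eq
  rw [h, mul_inv_cancel_right]
  exact Subgroup.zpow_mem_zpowers _ m

/-- The group `Λ^k_G(g) = (C_G(g) × ℝ)/⟨(g,-k)⟩`. -/
def LambdaK (G : Type) [Group G] (g : G) (k : ℤ) : Type :=
  (Subgroup.centralizer ({g} : Set G) × Multiplicative ℝ) ⧸ lambdaRel g k

instance (G : Type) [Group G] (g : G) (k : ℤ) : Group (LambdaK G g k) :=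
  inferInstanceAs (Group ((Subgroup.centralizer ({g} : Set G) × Multiplicative ℝ) ⧸ lambdaRel g k))

/-- The group `Λ_G(g) = (C_G(g) × ℝ)/⟨(g,-1)⟩`. -/
abbrev Lambda (G : Type) [Group G] (g : G) : Type := LambdaK G g 1

/-- The class `[h, t]` in `Λ^k_G(g)`. -/
def lmk {G : Type} [Group G] {g : G} {k : ℤ} (h : Subgroup.centralizer ({g} : Set G))
    (t : ℝ) : LambdaK G g k :=
  QuotientGroup.mk (h, Multiplicative.ofAdd t)

end
noncomputable section

/-- The inclusion `C_H(σ) → C_G(σ)` for a subgroup `H ≤ G` and `σ ∈ H`. -/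
def embC (G : Type) [Group G] (H : Subgroup G) (sigma : G) (hs : sigma ∈ H) :
    Subgroup.centralizer ({(⟨sigma, hs⟩ : H)} : Set H) →*
      Subgroup.centralizer ({sigma} : Set G) where
  toFun h := ⟨((h : H) : G), by
    rw [Subgroup.mem_centralizer_iff]
    rintro x rfl
    have hc := Subgroup.mem_centralizer_iff.mp h.2 ⟨x, hs⟩ rfl
    exact congrArg Subtype.val hc⟩
  map_one' := rfl
  map_mul' := fun a b => rfl

/-- The natural map `Λ_H(σ) → Λ_G(σ)`, `[h, t] ↦ [h, t]`. -/
def lambdaIncl (G : Type) [Group G] (H : Subgroup G) (sigma : G) (hs : sigma ∈ H) :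
    Lambda H (⟨sigma, hs⟩ : H) →* Lambda G sigma :=
  QuotientGroup.map _ _ ((embC G H sigma hs).prodMap (MonoidHom.id (Multiplicative ℝ)))
    (by
      intro x hx
      rw [lambdaRel, Subgroup.mem_zpowers_iff] at hx
      obtain ⟨m, rfl⟩ := hx
      rw [Subgroup.mem_comap, map_zpow]
      have h : ((embC G H sigma hs).prodMap (MonoidHom.id (Multiplicative ℝ)))
          (zElem (⟨sigma, hs⟩ : H) 1) = zElem sigma 1 := rfl
      rw [h]
      exact Subgroup.zpow_mem_zpowers _ m)

/-- `(W, ρW, i)` is the representation induced along `f : L → K` from `(V, ρV)`, in the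
sense of the universal property (Frobenius reciprocity); this characterizes
`MonoidAlgebra ℂ K ⊗_{MonoidAlgebra ℂ L} V` up to isomorphism. -/
def IsInducedAlong {L K : Type} [Group L] [Group K] (f : L →* K)
    {V W : Type} [AddCommGroup V] [Module ℂ V] [AddCommGroup W] [Module ℂ W]
    (rhoV : Representation ℂ L V) (rhoW : Representation ℂ K W) (i : V →ₗ[ℂ] W) : Prop :=
  (∀ (l : L) (v : V), i (rhoV l v) = rhoW (f l) (i v)) ∧
  ∀ (U : Type) [AddCommGroup U] [Module ℂ U] (rhoU : Representation ℂ K U)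
    (φ : V →ₗ[ℂ] U), (∀ (l : L) (v : V), φ (rhoV l v) = rhoU (f l) (φ v)) →
    ∃! ψ : W →ₗ[ℂ] U, (∀ (x : K) (w : W), ψ (rhoW x w) = rhoU x (ψ w)) ∧ ψ.comp i = φ


noncomputable section Model
open scoped Classical

variable {L K : Type} [Group L] [Group K]
variable {V : Type} [AddCommGroup V] [Module ℂ V]

/-- The carrier of the concrete induced representation: functions `K → V`
equivariant for right translation by the image of `L`. -/
def IndCarrier (f : L →* K) (lam : Representation ℂ L V) : Submodule ℂ (K → V) where
  carrier := {F | ∀ (l : L) (x : K), F (x * f l) = lam l⁻¹ (F x)}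
  add_mem' := by intro a b ha hb l x; simp [ha l x, hb l x]
  zero_mem' := by intro l x; simp
  smul_mem' := by intro c a ha l x; simp [ha l x]

/-- The action of `K` on `IndCarrier`. -/
def indRho (f : L →* K) (lam : Representation ℂ L V) :
    Representation ℂ K (IndCarrier f lam) where
  toFun k :=
    { toFun := fun F => ⟨fun x => F.1 (k⁻¹ * x), by
        intro l x
        simpa [mul_assoc] using F.2 l (k⁻¹ * x)⟩
      map_add' := by intro a b; ext x; rfl
      map_smul' := by intro c a; ext x; rfl }
  map_one' := by ext F x; simp
  map_mul' := by intro a b; ext F x; simp [mul_assoc]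

lemma indRho_apply (f : L →* K) (lam : Representation ℂ L V) (k : K)
    (F : IndCarrier f lam) (x : K) : (indRho f lam k F).1 x = F.1 (k⁻¹ * x) := rfl

/-- A one-sided inverse of an injective `f`. -/
def finv (f : L →* K) (x : K) : L :=
  if h : ∃ l, f l = x then Classical.choose h else 1

lemma f_finv (f : L →* K) {x : K} (h : ∃ l, f l = x) : f (finv f x) = x := by
  rw [finv, dif_pos h]; exact Classical.choose_spec h

lemma finv_f {f : L →* K} (hf : Function.Injective f) (l : L) : finv f (f l) = l :=
  hf (f_finv f ⟨l, rfl⟩)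

/-- The canonical map `V → IndCarrier`. -/
def indI (f : L →* K) (hf : Function.Injective f) (lam : Representation ℂ L V) :
    V →ₗ[ℂ] IndCarrier f lam where
  toFun v := ⟨fun x => if h : ∃ l, f l = x then lam (finv f x)⁻¹ v else 0, by
    intro l x
    dsimp only
    by_cases h : ∃ l', f l' = x
    · obtain ⟨l', rfl⟩ := h
      have h2 : ∃ l'', f l'' = f l' * f l := ⟨l' * l, by simp⟩
      rw [dif_pos h2, dif_pos ⟨l', rfl⟩, ← map_mul, finv_f hf, finv_f hf, mul_inv_rev,
        map_mul]
      rfl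
    · have h2 : ¬ ∃ l', f l' = x * f l := by
        rintro ⟨l', hl'⟩
        exact h ⟨l' * l⁻¹, by rw [map_mul, hl', map_inv, mul_inv_cancel_right]⟩
      rw [dif_neg h, dif_neg h2, map_zero]⟩
  map_add' := by
    intro a b; ext x; by_cases h : ∃ l, f l = x <;> simp [h]
  map_smul' := by
    intro c a; ext x; by_cases h : ∃ l, f l = x <;> simp [h]

lemma indI_apply_f (f : L →* K) (hf : Function.Injective f) (lam : Representation ℂ L V)
    (v : V) (l : L) : (indI f hf lam v).1 (f l) = lam l⁻¹ v := by
  show dite _ _ _ = _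
  rw [dif_pos ⟨l, rfl⟩, finv_f hf]

lemma indI_apply_not (f : L →* K) (hf : Function.Injective f) (lam : Representation ℂ L V)
    (v : V) {x : K} (h : ¬ ∃ l, f l = x) : (indI f hf lam v).1 x = 0 := by
  show dite _ _ _ = _
  rw [dif_neg h]

lemma indI_equiv (f : L →* K) (hf : Function.Injective f) (lam : Representation ℂ L V)
    (l : L) (v : V) : indI f hf lam (lam l v) = indRho f lam (f l) (indI f hf lam v) := by
  ext x
  rw [indRho_apply]
  by_cases h : ∃ l', f l' = x
  · obtain ⟨l', rfl⟩ := h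
    have : (f l)⁻¹ * f l' = f (l⁻¹ * l') := by simp
    rw [indI_apply_f f hf lam, this]
    show _ = dite _ _ _
    rw [dif_pos ⟨l⁻¹ * l', rfl⟩, finv_f hf, mul_inv_rev, inv_inv, map_mul]
    rfl
  · have h2 : ¬ ∃ l'', f l'' = (f l)⁻¹ * x := by
      rintro ⟨l'', hl''⟩
      exact h ⟨l * l'', by rw [map_mul, hl'', mul_inv_cancel_left]⟩
    rw [indI_apply_not f hf lam _ h, indI_apply_not f hf lam _ h2]

end Model

noncomputable section Model2

variable {L K : Type} [Group L] [Group K]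
variable {V : Type} [AddCommGroup V] [Module ℂ V]
variable (f : L →* K) (hf : Function.Injective f) (lam : Representation ℂ L V)

lemma out_rel (x : K) : ∃ l : L, (QuotientGroup.mk x : K ⧸ f.range).out * f l = x := by
  have h : (QuotientGroup.mk (QuotientGroup.mk x : K ⧸ f.range).out : K ⧸ f.range)
      = QuotientGroup.mk x := QuotientGroup.out_eq' _
  obtain ⟨l, hl⟩ := QuotientGroup.eq.mp h
  exact ⟨l, by rw [hl, mul_inv_cancel_left]⟩

lemma range_out_iff (x : K) (c : K ⧸ f.range) :
    (∃ l : L, f l = c.out⁻¹ * x) ↔ c = QuotientGroup.mk x := by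
  constructor
  · rintro ⟨l, hl⟩
    have : (QuotientGroup.mk c.out : K ⧸ f.range) = QuotientGroup.mk x :=
      QuotientGroup.eq.mpr ⟨l, hl⟩
    rwa [QuotientGroup.out_eq'] at this
  · rintro rfl
    have h : (QuotientGroup.mk (QuotientGroup.mk x : K ⧸ f.range).out : K ⧸ f.range)
        = QuotientGroup.mk x := QuotientGroup.out_eq' _
    obtain ⟨l, hl⟩ := QuotientGroup.eq.mp h
    exact ⟨l, hl⟩

variable {U : Type} [AddCommGroup U] [Module ℂ U] (rhoU : Representation ℂ K U)
  (φ : V →ₗ[ℂ] U)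

/-- The coset-wise contribution to the universal map. -/
def TT (F : IndCarrier f lam) (x : K) : U := rhoU x (φ (F.1 x))

lemma TT_congr (hφ : ∀ (l : L) (v : V), φ (lam l v) = rhoU (f l) (φ v))
    (F : IndCarrier f lam) {x y : K}
    (h : (QuotientGroup.mk x : K ⧸ f.range) = QuotientGroup.mk y) :
    TT f lam rhoU φ F x = TT f lam rhoU φ F y := by
  obtain ⟨l, hl⟩ := QuotientGroup.eq.mp h
  have hy : y = x * f l := by rw [hl, mul_inv_cancel_left]
  subst hy
  rw [TT, TT, F.2 l x, hφ l⁻¹, ← Module.End.mul_apply, ← map_mul, map_inv,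
    mul_inv_cancel_right]

variable [Fintype (K ⧸ f.range)]

/-- The universal map out of the concrete induced representation. -/
def psi : IndCarrier f lam →ₗ[ℂ] U where
  toFun F := ∑ c : K ⧸ f.range, rhoU c.out (φ (F.1 c.out))
  map_add' := by intro a b; simp [Finset.sum_add_distrib]
  map_smul' := by intro c a; simp [Finset.smul_sum]

lemma psi_apply (F : IndCarrier f lam) :
    psi f lam rhoU φ F = ∑ c : K ⧸ f.range, TT f lam rhoU φ F c.out := rfl

lemma psi_equivariant (hφ : ∀ (l : L) (v : V), φ (lam l v) = rhoU (f l) (φ v))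
    (k : K) (F : IndCarrier f lam) :
    psi f lam rhoU φ (indRho f lam k F) = rhoU k (psi f lam rhoU φ F) := by
  rw [psi_apply, psi_apply, map_sum]
  have key : ∀ c : K ⧸ f.range,
      TT f lam rhoU φ (indRho f lam k F) c.out
        = rhoU k (TT f lam rhoU φ F ((k⁻¹ • c).out)) := by
    intro c
    have h1 : TT f lam rhoU φ F ((k⁻¹ • c).out) = TT f lam rhoU φ F (k⁻¹ * c.out) := by
      apply TT_congr f lam rhoU φ hφ
      rw [QuotientGroup.out_eq']
      exact (MulAction.Quotient.mk_smul_out f.range k⁻¹ c).symm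
    rw [h1, TT, TT, indRho_apply]
    have h2 : rhoU c.out = rhoU k * rhoU (k⁻¹ * c.out) := by
      rw [← map_mul, mul_inv_cancel_left]
    rw [h2]
    rfl
  rw [Finset.sum_congr rfl (fun c _ => key c)]
  exact Fintype.sum_equiv (MulAction.toPerm k⁻¹ : Equiv.Perm (K ⧸ f.range))
    (fun c => rhoU k (TT f lam rhoU φ F ((k⁻¹ • c).out)))
    (fun c => rhoU k (TT f lam rhoU φ F c.out)) (fun c => rfl)

lemma psi_comp (hφ : ∀ (l : L) (v : V), φ (lam l v) = rhoU (f l) (φ v)) (v : V) :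
    psi f lam rhoU φ (indI f hf lam v) = φ v := by
  rw [psi_apply]
  rw [Finset.sum_eq_single (QuotientGroup.mk (1 : K) : K ⧸ f.range)]
  · have h1 : TT f lam rhoU φ (indI f hf lam v) ((QuotientGroup.mk (1:K) : K ⧸ f.range).out)
        = TT f lam rhoU φ (indI f hf lam v) 1 :=
      TT_congr f lam rhoU φ hφ _ (QuotientGroup.out_eq' _)
    rw [h1, TT]
    have h2 : (indI f hf lam v).1 1 = v := by
      have := indI_apply_f f hf lam v 1
      simpa using this
    rw [h2, map_one]
    rfl
  · intro c _ hc
    have hnot : ¬ ∃ l, f l = c.out := by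
      intro hl
      apply hc
      rw [← (range_out_iff f (1 : K) c)]
      obtain ⟨l, hl'⟩ := hl
      exact ⟨l⁻¹, by rw [map_inv, hl', mul_one]⟩
    rw [TT, indI_apply_not f hf lam v hnot, map_zero, map_zero]
  · intro h
    exact absurd (Finset.mem_univ _) h

lemma ind_expand (F : IndCarrier f lam) :
    F = ∑ c : K ⧸ f.range, indRho f lam c.out (indI f hf lam (F.1 c.out)) := by
  apply Subtype.ext
  have hco : ((∑ c : K ⧸ f.range, indRho f lam c.out (indI f hf lam (F.1 c.out)) :
      IndCarrier f lam) : K → V)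
      = ∑ c : K ⧸ f.range, ((indRho f lam c.out (indI f hf lam (F.1 c.out)) :
        IndCarrier f lam) : K → V) :=
    map_sum (IndCarrier f lam).subtype _ _
  rw [hco]
  funext x
  rw [Finset.sum_apply]
  rw [Finset.sum_eq_single (QuotientGroup.mk x : K ⧸ f.range)]
  · obtain ⟨l, hl⟩ := out_rel f x
    have hfl : f l = (QuotientGroup.mk x : K ⧸ f.range).out⁻¹ * x :=
      eq_inv_mul_iff_mul_eq.mpr hl
    rw [indRho_apply, ← hfl, indI_apply_f f hf lam]
    rw [← F.2 l _, hl]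
  · intro c _ hc
    rw [indRho_apply]
    apply indI_apply_not f hf lam
    rw [range_out_iff f x c]
    exact hc
  · intro h
    exact absurd (Finset.mem_univ _) h

lemma psi_unique (ψ' : IndCarrier f lam →ₗ[ℂ] U)
    (h1 : ∀ (k : K) (F : IndCarrier f lam), ψ' (indRho f lam k F) = rhoU k (ψ' F))
    (h2 : ∀ v, ψ' (indI f hf lam v) = φ v) :
    ψ' = psi f lam rhoU φ := by
  apply LinearMap.ext
  intro F
  rw [psi_apply]
  conv_lhs => rw [ind_expand f hf lam F]
  rw [map_sum]
  apply Finset.sum_congr rfl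
  intro c _
  rw [h1, h2, TT]

/-- The linear equivalence with a direct sum of copies of `V`. -/
def indEquivPi : IndCarrier f lam ≃ₗ[ℂ] ((K ⧸ f.range) → V) := by
  apply LinearEquiv.ofBijective
    { toFun := fun F => fun c => F.1 c.out
      map_add' := by intro a b; rfl
      map_smul' := by intro c a; rfl }
  constructor
  · intro F1 F2 h
    apply Subtype.ext
    funext x
    obtain ⟨l, hl⟩ := out_rel f x
    have h1 := congrFun h (QuotientGroup.mk x : K ⧸ f.range)
    have e1 : F1.1 x = lam l⁻¹ (F1.1 (QuotientGroup.mk x : K ⧸ f.range).out) := by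
      rw [← F1.2 l _, hl]
    have e2 : F2.1 x = lam l⁻¹ (F2.1 (QuotientGroup.mk x : K ⧸ f.range).out) := by
      rw [← F2.2 l _, hl]
    rw [e1, e2]
    exact congrArg _ h1
  · intro Gf
    refine ⟨∑ c : K ⧸ f.range, indRho f lam c.out (indI f hf lam (Gf c)), ?_⟩
    funext c'
    have hco : ((∑ c : K ⧸ f.range, indRho f lam c.out (indI f hf lam (Gf c)) :
        IndCarrier f lam) : K → V)
        = ∑ c : K ⧸ f.range, ((indRho f lam c.out (indI f hf lam (Gf c)) :
          IndCarrier f lam) : K → V) :=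
      map_sum (IndCarrier f lam).subtype _ _
    show ((∑ c : K ⧸ f.range, indRho f lam c.out (indI f hf lam (Gf c)) :
      IndCarrier f lam) : K → V) c'.out = Gf c'
    rw [hco, Finset.sum_apply]
    rw [Finset.sum_eq_single c']
    · rw [indRho_apply]
      have h3 : (c'.out⁻¹ * c'.out) = f 1 := by simp
      rw [h3, indI_apply_f f hf lam]
      simp
    · intro c _ hc
      rw [indRho_apply]
      apply indI_apply_not f hf lam
      rw [range_out_iff f c'.out c, QuotientGroup.out_eq']
      exact hc
    · intro h
      exact absurd (Finset.mem_univ _) h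

include hf in
lemma indCarrier_finrank [FiniteDimensional ℂ V] :
    Module.finrank ℂ (IndCarrier f lam) = f.range.index * Module.finrank ℂ V := by
  rw [(indEquivPi f hf lam).finrank_eq, Module.finrank_pi_fintype, Finset.sum_const,
    Finset.card_univ, smul_eq_mul, Subgroup.index, Nat.card_eq_fintype_card]

end Model2

section LambdaAux

lemma lmk_mul {G : Type} [Group G] {g : G} {k : ℤ}
    (h h' : Subgroup.centralizer ({g} : Set G)) (t t' : ℝ) :
    (lmk h t * lmk h' t' : LambdaK G g k) = lmk (h * h') (t + t') := rfl

lemma lmk_surj {G : Type} [Group G] {g : G} {k : ℤ} (x : LambdaK G g k) :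
    ∃ h t, x = lmk h t := by
  refine QuotientGroup.induction_on x ?_
  intro z
  exact ⟨z.1, Multiplicative.toAdd z.2, rfl⟩

lemma embC_injective (G : Type) [Group G] (H : Subgroup G) (sigma : G) (hs : sigma ∈ H) :
    Function.Injective (embC G H sigma hs) := by
  intro a b hab
  have h := congrArg Subtype.val hab
  exact Subtype.ext (Subtype.ext h)

lemma embC_gElem (G : Type) [Group G] (H : Subgroup G) (sigma : G) (hs : sigma ∈ H) :
    embC G H sigma hs (gElem (⟨sigma, hs⟩ : H)) = gElem sigma :=
  Subtype.ext rfl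

lemma zElem_zpow {G : Type} [Group G] (g : G) (m : ℤ) :
    zElem g 1 ^ m = (gElem g ^ m, Multiplicative.ofAdd (-(m : ℝ))) := by
  apply Prod.ext
  · show (MonoidHom.fst _ _) (zElem g 1 ^ m) = _
    rw [map_zpow]
    rfl
  · show (MonoidHom.snd _ _) (zElem g 1 ^ m) = _
    rw [map_zpow]
    show (Multiplicative.ofAdd (-((1:ℤ) : ℝ))) ^ m = _
    rw [← ofAdd_zsmul]
    norm_num

lemma lambdaIncl_lmk (G : Type) [Group G] (H : Subgroup G) (sigma : G) (hs : sigma ∈ H)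
    (h : Subgroup.centralizer ({(⟨sigma, hs⟩ : H)} : Set H)) (t : ℝ) :
    lambdaIncl G H sigma hs (lmk h t) = lmk (embC G H sigma hs h) t := rfl

lemma lambdaIncl_injective (G : Type) [Group G] (H : Subgroup G) (sigma : G)
    (hs : sigma ∈ H) : Function.Injective (lambdaIncl G H sigma hs) := by
  intro a b
  refine QuotientGroup.induction_on a ?_
  intro z
  refine QuotientGroup.induction_on b ?_
  intro w hab
  have hmap : ∀ u, lambdaIncl G H sigma hs (QuotientGroup.mk u)
      = QuotientGroup.mk (((embC G H sigma hs).prodMap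
        (MonoidHom.id (Multiplicative ℝ))) u) := fun u => rfl
  rw [hmap, hmap] at hab
  obtain ⟨m, hm⟩ := Subgroup.mem_zpowers_iff.mp (QuotientGroup.eq.mp hab)
  apply QuotientGroup.eq.mpr
  apply Subgroup.mem_zpowers_iff.mpr
  refine ⟨m, ?_⟩
  have hm' : zElem sigma 1 ^ m = ((embC G H sigma hs).prodMap
      (MonoidHom.id (Multiplicative ℝ))) (z⁻¹ * w) := by
    rw [hm, map_mul, map_inv]
  rw [zElem_zpow] at hm'
  have h1 : gElem sigma ^ m = embC G H sigma hs (z⁻¹ * w).1 := congrArg Prod.fst hm'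
  have h2 : Multiplicative.ofAdd (-(m : ℝ)) = (z⁻¹ * w).2 := congrArg Prod.snd hm'
  have h3 : embC G H sigma hs (gElem (⟨sigma, hs⟩ : H) ^ m)
      = embC G H sigma hs (z⁻¹ * w).1 := by
    rw [map_zpow, embC_gElem, h1]
  have h4 : gElem (⟨sigma, hs⟩ : H) ^ m = (z⁻¹ * w).1 := embC_injective G H sigma hs h3
  rw [zElem_zpow]
  exact Prod.ext h4 h2

end LambdaAux

/-- For `H ≤ G` finite and `σ ∈ H`:
the natural map `Λ_H(σ) → Λ_G(σ)` is an injective homomorphism, and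
`Ind_{Λ_H(σ)}^{Λ_G(σ)} (λ ⊙ χ) ≅ (Ind_{C_H(σ)}^{C_G(σ)} λ) ⊙ χ`; in particular
`(Ind λ)(σ) = χ(1)·id`, and the underlying space is `V^{⊕m}`, `m = [C_G(σ) : C_H(σ)]`. -/
theorem lambda_induced_rep (G : Type) [Group G] [Finite G] (H : Subgroup G)
    (sigma : G) (hs : sigma ∈ H)
    (V : Type) [AddCommGroup V] [Module ℂ V] [FiniteDimensional ℂ V]
    (lam : Representation ℂ (Subgroup.centralizer ({(⟨sigma, hs⟩ : H)} : Set H)) V)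
    (chi : Multiplicative ℝ →* ℂˣ)
    (hcomp : lam (gElem (⟨sigma, hs⟩ : H)) =
      (chi (Multiplicative.ofAdd (1 : ℝ)) : ℂ) • (LinearMap.id : V →ₗ[ℂ] V))
    -- `ρV = λ ⊙ χ` on `Λ_H(σ)`
    (rhoV : Representation ℂ (Lambda H (⟨sigma, hs⟩ : H)) V)
    (hrhoV : ∀ (h : Subgroup.centralizer ({(⟨sigma, hs⟩ : H)} : Set H)) (t : ℝ),
      rhoV (lmk h t) = (chi (Multiplicative.ofAdd t) : ℂ) • lam h)
    -- `(W₁, lamInd, j)` realizes `Ind_{C_H(σ)}^{C_G(σ)} λ`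
    (W₁ : Type) [AddCommGroup W₁] [Module ℂ W₁]
    (lamInd : Representation ℂ (Subgroup.centralizer ({sigma} : Set G)) W₁)
    (j : V →ₗ[ℂ] W₁)
    (hInd : IsInducedAlong (embC G H sigma hs) lam lamInd j)
    -- `ρW = (Ind λ) ⊙ χ` on `Λ_G(σ)`
    (rhoW : Representation ℂ (Lambda G sigma) W₁)
    (hrhoW : ∀ (h : Subgroup.centralizer ({sigma} : Set G)) (t : ℝ),
      rhoW (lmk h t) = (chi (Multiplicative.ofAdd t) : ℂ) • lamInd h) :
    -- `[h, t] ↦ [h, t]` is an injective homomorphism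
    (∀ (h : Subgroup.centralizer ({(⟨sigma, hs⟩ : H)} : Set H)) (t : ℝ),
      lambdaIncl G H sigma hs (lmk h t) = lmk (embC G H sigma hs h) t) ∧
    Function.Injective (lambdaIncl G H sigma hs) ∧
    -- `(Ind λ)(σ) = χ(1)·id`, so that `(Ind λ) ⊙ χ` is defined
    lamInd (gElem sigma) =
      (chi (Multiplicative.ofAdd (1 : ℝ)) : ℂ) • (LinearMap.id : W₁ →ₗ[ℂ] W₁) ∧
    -- the underlying vector space of the induced representation is `V^{⊕m}`
    Module.finrank ℂ W₁ = (embC G H sigma hs).range.index * Module.finrank ℂ V ∧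
    -- `ρW` is the representation induced from `ρV` along `Λ_H(σ) → Λ_G(σ)`, via `j`
    IsInducedAlong (lambdaIncl G H sigma hs) rhoV rhoW j := by
  classical
  have hfinj : Function.Injective (embC G H sigma hs) := embC_injective G H sigma hs
  haveI : Finite (Subgroup.centralizer ({sigma} : Set G)) := Subtype.finite
  haveI : Fintype (Subgroup.centralizer ({sigma} : Set G) ⧸ (embC G H sigma hs).range) :=
    Fintype.ofFinite _
  obtain ⟨hj, huni⟩ := hInd
  -- `α : W₁ → W₀` from the universal property of `W₁`
  obtain ⟨α, ⟨hα1, hα2⟩, -⟩ := huni (IndCarrier (embC G H sigma hs) lam)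
    (indRho (embC G H sigma hs) lam) (indI (embC G H sigma hs) hfinj lam)
    (fun l v => indI_equiv (embC G H sigma hs) hfinj lam l v)
  -- `β : W₀ → W₁` from the universal property of the model
  set β := psi (embC G H sigma hs) lam lamInd j with hβdef
  have hβ1 : ∀ k F, β (indRho (embC G H sigma hs) lam k F) = lamInd k (β F) :=
    psi_equivariant (embC G H sigma hs) lam lamInd j hj
  have hβ2 : ∀ v, β (indI (embC G H sigma hs) hfinj lam v) = j v :=
    psi_comp (embC G H sigma hs) hfinj lam lamInd j hj
  have hα2' : ∀ v, α (j v) = indI (embC G H sigma hs) hfinj lam v :=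
    fun v => LinearMap.congr_fun hα2 v
  -- `β ∘ α = id`
  obtain ⟨ψ₀, -, hψ₀uniq⟩ := huni W₁ lamInd j hj
  have hba : β.comp α = LinearMap.id := by
    have e1 : β.comp α = ψ₀ := by
      apply hψ₀uniq
      constructor
      · intro x w
        simp only [LinearMap.comp_apply, hα1, hβ1]
      · apply LinearMap.ext
        intro v
        simp only [LinearMap.comp_apply, hα2', hβ2]
    have e2 : LinearMap.id = ψ₀ := by
      apply hψ₀uniq
      exact ⟨fun x w => rfl, by apply LinearMap.ext; intro v; rfl⟩
    rw [e1, e2]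
  have hba' : ∀ w, β (α w) = w := fun w => LinearMap.congr_fun hba w
  -- `α ∘ β = id`
  have hab : α.comp β = LinearMap.id := by
    have e1 := psi_unique (embC G H sigma hs) hfinj lam
      (indRho (embC G H sigma hs) lam) (indI (embC G H sigma hs) hfinj lam)
      (α.comp β)
      (fun k F => by simp only [LinearMap.comp_apply, hβ1, hα1])
      (fun v => by simp only [LinearMap.comp_apply, hβ2, hα2'])
    have e2 := psi_unique (embC G H sigma hs) hfinj lam
      (indRho (embC G H sigma hs) lam) (indI (embC G H sigma hs) hfinj lam)
      LinearMap.id (fun k F => rfl) (fun v => rfl)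
    rw [e1, e2]
  -- the linear equivalence `W₀ ≃ W₁`
  have hfinrank : Module.finrank ℂ W₁
      = (embC G H sigma hs).range.index * Module.finrank ℂ V := by
    rw [← (LinearEquiv.ofLinear β α hba hab).finrank_eq]
    exact indCarrier_finrank (embC G H sigma hs) hfinj lam
  -- generation of `W₁`
  set S : Set W₁ := {w | ∃ g v, lamInd g (j v) = w} with hSdef
  have hspan : Submodule.span ℂ S = ⊤ := by
    rw [Submodule.eq_top_iff']
    intro w
    have hw : β (α w) = ∑ c : Subgroup.centralizer ({sigma} : Set G)
        ⧸ (embC G H sigma hs).range,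
        lamInd c.out (j ((α w).1 c.out)) := by
      conv_lhs => rw [ind_expand (embC G H sigma hs) hfinj lam (α w)]
      rw [map_sum]
      exact Finset.sum_congr rfl fun c _ => by rw [hβ1, hβ2]
    rw [← hba' w, hw]
    exact Submodule.sum_mem _ fun c _ => Submodule.subset_span ⟨_, _, rfl⟩
  -- `(Ind λ)(σ) = χ(1) • id`
  have hc3 : lamInd (gElem sigma)
      = (chi (Multiplicative.ofAdd (1 : ℝ)) : ℂ) • (LinearMap.id : W₁ →ₗ[ℂ] W₁) := by
    apply LinearMap.ext_on hspan
    rintro w ⟨g, v, rfl⟩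
    have hcomm : gElem sigma * g = g * gElem sigma :=
      Subtype.ext (Subgroup.mem_centralizer_iff.mp g.2 sigma rfl)
    have hg1 : lamInd (gElem sigma) (j v)
        = (chi (Multiplicative.ofAdd (1 : ℝ)) : ℂ) • j v := by
      rw [← embC_gElem G H sigma hs, ← hj, hcomp]
      simp
    calc lamInd (gElem sigma) (lamInd g (j v))
        = lamInd (gElem sigma * g) (j v) := by rw [map_mul]; rfl
      _ = lamInd g (lamInd (gElem sigma) (j v)) := by rw [hcomm, map_mul]; rfl
      _ = (chi (Multiplicative.ofAdd (1 : ℝ)) : ℂ) • lamInd g (j v) := by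
          rw [hg1, map_smul]
      _ = ((chi (Multiplicative.ofAdd (1 : ℝ)) : ℂ)
            • (LinearMap.id : W₁ →ₗ[ℂ] W₁)) (lamInd g (j v)) := rfl
  have hchi0 : (chi (Multiplicative.ofAdd (0 : ℝ)) : ℂ) = 1 := by
    rw [ofAdd_zero, map_one, Units.val_one]
  refine ⟨fun h t => rfl, lambdaIncl_injective G H sigma hs, hc3, hfinrank, ?_, ?_⟩
  · -- equivariance of j
    intro x v
    obtain ⟨h, t, rfl⟩ := lmk_surj x
    rw [hrhoV, lambdaIncl_lmk, hrhoW]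
    simp only [LinearMap.smul_apply, map_smul]
    rw [hj]
  · -- universal property of rhoW
    intro U _ _ rhoU φ hφ
    let lamU : Representation ℂ (Subgroup.centralizer ({sigma} : Set G)) U :=
      { toFun := fun g => rhoU (lmk g 0)
        map_one' := by
          show rhoU (lmk 1 0) = 1
          rw [show (lmk (1 : Subgroup.centralizer ({sigma} : Set G)) 0
            : Lambda G sigma) = 1 from rfl, map_one]
        map_mul' := fun a b => by
          show rhoU (lmk (a * b) 0) = rhoU (lmk a 0) * rhoU (lmk b 0)
          rw [← map_mul rhoU, lmk_mul, add_zero] }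
    have hlamU : ∀ g, lamU g = rhoU (lmk g 0) := fun g => rfl
    have hφ' : ∀ l v, φ (lam l v) = lamU (embC G H sigma hs l) (φ v) := by
      intro l v
      have h0 : rhoV (lmk l 0) v = lam l v := by
        rw [hrhoV, hchi0, one_smul]
      rw [← h0, hφ (lmk l 0) v]
      rfl
    obtain ⟨ψ, ⟨hψ1, hψ2⟩, hψuniq⟩ := huni U lamU φ hφ'
    have hψ2' : ∀ v, ψ (j v) = φ v := fun v => LinearMap.congr_fun hψ2 v
    -- `rhoU (lmk 1 t)` acts as `χ(t)` on the image of `ψ`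
    have hkey : ∀ (t : ℝ) (w : W₁),
        rhoU (lmk 1 t) (ψ w) = (chi (Multiplicative.ofAdd t) : ℂ) • ψ w := by
      intro t
      have hmaps : (rhoU (lmk 1 t)).comp ψ
          = (chi (Multiplicative.ofAdd t) : ℂ) • ψ := by
        apply LinearMap.ext_on hspan
        rintro w ⟨g, v, rfl⟩
        have hstep1 : ψ (lamInd g (j v)) = lamU g (φ v) := by rw [hψ1, hψ2']
        have hstep2 : rhoU (lmk 1 t) (lamU g (φ v))
            = lamU g (rhoU (lmk 1 t) (φ v)) := by
          show (rhoU (lmk 1 t) * rhoU (lmk g 0)) (φ v)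
            = (rhoU (lmk g 0) * rhoU (lmk 1 t)) (φ v)
          rw [← map_mul, ← map_mul, lmk_mul, lmk_mul, one_mul, mul_one, zero_add, add_zero]
        have hstep3 : rhoU (lmk 1 t) (φ v) = (chi (Multiplicative.ofAdd t) : ℂ) • φ v := by
          have hincl : (lmk (1 : Subgroup.centralizer ({sigma} : Set G)) t
              : Lambda G sigma) = lambdaIncl G H sigma hs (lmk 1 t) := by
            rw [lambdaIncl_lmk, map_one]
          rw [hincl, ← hφ (lmk 1 t) v, hrhoV]
          simp
        simp only [LinearMap.comp_apply, LinearMap.smul_apply]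
        rw [hstep1, hstep2, hstep3, map_smul, ← hstep1]
      intro w
      exact LinearMap.congr_fun hmaps w
    refine ⟨ψ, ⟨?_, hψ2⟩, ?_⟩
    · intro x w
      obtain ⟨g, t, rfl⟩ := lmk_surj x
      rw [hrhoW]
      have hlhs : ψ (((chi (Multiplicative.ofAdd t) : ℂ) • lamInd g) w)
          = (chi (Multiplicative.ofAdd t) : ℂ) • lamU g (ψ w) := by
        simp only [LinearMap.smul_apply, map_smul, hψ1]
      rw [hlhs]
      have hrhs : rhoU (lmk g t) (ψ w)
          = (chi (Multiplicative.ofAdd t) : ℂ) • lamU g (ψ w) := by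
        have : (lmk g t : Lambda G sigma) = lmk g 0 * lmk 1 t := by
          rw [lmk_mul, mul_one, zero_add]
        rw [this, map_mul rhoU]
        show rhoU (lmk g 0) (rhoU (lmk 1 t) (ψ w)) = _
        rw [hkey, map_smul]
        rfl
      rw [hrhs]
    · rintro ψ' ⟨hψ'1, hψ'2⟩
      apply hψuniq
      refine ⟨?_, hψ'2⟩
      intro g w
      have hW : lamInd g w = rhoW (lmk g 0) w := by
        rw [hrhoW, hchi0, one_smul]
      rw [hW, hψ'1]
      rfl

end
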